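/- Let S = ℂ[x_0,…,x_n] and let e ≥ 2 be an integer. Let P_1, …, P_r and Q_1, …, Q_r be homogeneous polynomials with deg P_i = d_i satisfying 1 ≤ d_i and 2·d_i ≤ e, and deg Q_i = e − d_i, such that P_1, …, P_r, Q_1, …, Q_r is a regular sequence in S. Let I' = (P_1,…,P_r) and write (S/I')_j = S_j/(I' ∩ S_j). Consider the ℂ-linear map φ : ⊕_{i=1}^r (S/I')_{d_i} → (S/I')_e sending (g_1,…,g_r) to the class of Σ_{i=1}^r g_i·Q_i. Then dim_ℂ ker φ = a(a−1)/2, where a = #{i : 2·d_i = e}. -/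

import Mathlib

/-- The polynomial ring `S = ℂ[x_0, …, x_n]` (in `n+1` variables). -/
abbrev PolyS (n : ℕ) : Type := MvPolynomial (Fin (n + 1)) ℂ

/-- The graded piece `S_j` of homogeneous polynomials of degree `j` (together with `0`). -/
noncomputable abbrev polyGrade (n j : ℕ) : Submodule ℂ (PolyS n) :=
  MvPolynomial.homogeneousSubmodule (Fin (n + 1)) ℂ j

/-- The graded piece `(S/I)_j = S_j / (I ∩ S_j)` of the quotient by an ideal `I`. -/
noncomputable abbrev quotPiece (n : ℕ) (I : Ideal (PolyS n)) (j : ℕ) : Type :=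
  ↥(polyGrade n j) ⧸ (Submodule.comap (polyGrade n j).subtype (I.restrictScalars ℂ))

/-!
Since `Q₁, …, Q_r` is a regular sequence modulo `I' = (P₁, …, P_r)`, every syzygy
`∑ gᵢ Qᵢ ≡ 0 (mod I')` is, modulo `I'`, a combination `gᵢ ≡ ∑ⱼ cᵢⱼ Qⱼ` of Koszul syzygies with
`c` alternating. In degree `dᵢ` only the constant term of `cᵢⱼ` survives, and only when
`dᵢ + dⱼ = e`; as `2dᵢ, 2dⱼ ≤ e` this forces `2dᵢ = 2dⱼ = e`. So the kernel of `φ` is spanned by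
the Koszul syzygies `Qⱼ eᵢ - Qᵢ eⱼ` with `i < j` in `{i : 2dᵢ = e}`, and these are linearly
independent because no nontrivial `ℂ`-combination of the `Qⱼ` lies in `I'` (again by regularity).
-/

open MvPolynomial RingTheory.Sequence

section RegularSequence

variable {R : Type*} [CommRing R]

/-- `x` is a weakly regular sequence on `R ⧸ I`, stated in `R`. -/
def Ideal.IsWeaklyRegularMod {m : ℕ} (I : Ideal R) (x : Fin m → R) : Prop :=
  ∀ k s, x k * s ∈ I ⊔ Ideal.span (x '' Set.Iio k) → s ∈ I ⊔ Ideal.span (x '' Set.Iio k)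

theorem Ideal.ofList_ofFn {m : ℕ} (f : Fin m → R) :
    Ideal.ofList (List.ofFn f) = Ideal.span (Set.range f) :=
  congrArg Ideal.span (Set.ext fun _ => List.mem_ofFn)

theorem Ideal.ofList_take_ofFn_append {r₁ r₂ : ℕ} (P : Fin r₁ → R) (Q : Fin r₂ → R)
    (k : Fin r₂) :
    Ideal.ofList ((List.ofFn P ++ List.ofFn Q).take (r₁ + k)) =
      Ideal.span (Set.range P) ⊔ Ideal.span (Q '' Set.Iio k) := by
  rw [List.take_append, List.take_of_length_le (by simp), Ideal.ofList_append, Ideal.ofList_ofFn]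
  refine congrArg _ (congrArg Ideal.span (Set.ext fun y => ?_))
  simp only [Set.mem_ofPred_eq, List.mem_take_iff_getElem, List.getElem_ofFn, Set.mem_image,
    Set.mem_Iio, List.length_ofFn]
  exact ⟨fun ⟨j, hj, hy⟩ => ⟨_, Fin.mk_lt_of_lt_val (by omega), hy⟩,
    fun ⟨j, hj, hy⟩ => ⟨j, by have := Fin.lt_def.mp hj; omega, hy⟩⟩

theorem RingTheory.Sequence.IsWeaklyRegular.isWeaklyRegularMod {r₁ r₂ : ℕ} {P : Fin r₁ → R}
    {Q : Fin r₂ → R} (h : IsWeaklyRegular R (List.ofFn P ++ List.ofFn Q)) :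
    (Ideal.span (Set.range P)).IsWeaklyRegularMod Q := fun k s hs => by
  have hreg := h.regular_mod_prev (r₁ + k) (by simp)
  rw [Ideal.ofList_take_ofFn_append, smul_eq_mul, Ideal.mul_top,
    List.getElem_append_right (by simp)] at hreg
  simp only [List.length_ofFn, add_tsub_cancel_left, List.getElem_ofFn] at hreg
  exact mem_of_isSMulRegular_quotient_of_smul_mem hreg hs

theorem RingTheory.Sequence.IsRegular.span_range_sup_ne_top {r₁ r₂ : ℕ} {P : Fin r₁ → R}
    {Q : Fin r₂ → R} (h : IsRegular R (List.ofFn P ++ List.ofFn Q)) :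
    Ideal.span (Set.range P) ⊔ Ideal.span (Set.range Q) ≠ ⊤ := by
  have := h.top_ne_smul
  rw [smul_eq_mul, Ideal.mul_top, Ideal.ofList_append, Ideal.ofList_ofFn, Ideal.ofList_ofFn] at this
  exact this.symm

theorem Fin.image_Iio_last_eq_range_init {α : Type*} {m : ℕ} (x : Fin (m + 1) → α) :
    x '' Set.Iio (last m) = Set.range (init x) := by
  rw [init_def, Set.range_comp', Fin.range_castSucc]
  rfl

theorem Fin.image_Iio_init {α : Type*} {m : ℕ} (x : Fin (m + 1) → α) (k : Fin m) :
    init x '' Set.Iio k = x '' Set.Iio k.castSucc := by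
  rw [← image_castSucc_Iio, Set.image_image]
  rfl

open Fin in
/-- Exactness of the Koszul complex in degree one, modulo `I`. -/
theorem Ideal.IsWeaklyRegularMod.exists_alternating_syzygy {I : Ideal R} :
    ∀ {m : ℕ} {x : Fin m → R}, I.IsWeaklyRegularMod x →
    ∀ g : Fin m → R, ∑ i, g i * x i ∈ I →
    ∃ c : Fin m → Fin m → R, (∀ i, c i i = 0) ∧ (∀ i j, c j i = -c i j) ∧
      ∀ i, g i - ∑ j, c i j * x j ∈ I
  | 0, _, _, _, _ => ⟨0, fun i => i.elim0, fun i => i.elim0, fun i => i.elim0⟩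
  | m + 1, x, hx, g, hg => by
    have hsum : ∑ i, g i * x i = ∑ j : Fin m, g j.castSucc * init x j + g (last m) * x (last m) :=
      sum_univ_castSucc _
    have hlast : g (last m) ∈ I ⊔ Ideal.span (Set.range (init x)) := by
      rw [← image_Iio_last_eq_range_init]
      refine hx _ _ ?_
      rw [image_Iio_last_eq_range_init, mul_comm, eq_sub_of_add_eq' hsum.symm]
      exact sub_mem (mem_sup_left hg)
        (mem_sup_right (Submodule.sum_mem _ fun j _ => mul_mem_left _ _ (subset_span ⟨j, rfl⟩)))
    obtain ⟨u, hu, v, hv, huv⟩ := Submodule.mem_sup.mp hlast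
    obtain ⟨t, rfl⟩ := Ideal.mem_span_range_iff_exists_fun.mp hv
    have hg' : ∑ j, (g j.castSucc + t j * x (last m)) * init x j =
        ∑ i, g i * x i - u * x (last m) := by
      rw [hsum, ← huv]
      simp only [add_mul, Finset.sum_add_distrib, Finset.sum_mul, mul_right_comm _ (x (last m))]
      ring
    obtain ⟨c, hdiag, hanti, hc⟩ := exists_alternating_syzygy (x := init x)
      (fun k s hs => by rw [image_Iio_init] at hs ⊢; exact hx k.castSucc s hs)
      (fun j => g j.castSucc + t j * x (last m)) (hg' ▸ sub_mem hg (mul_mem_right _ _ hu))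
    -- the last row records `g (last m) ≡ ∑ tⱼ xⱼ`, the last column compensates with `-t`
    refine ⟨snoc (fun j => snoc (c j) (-t j)) (snoc t 0), fun i => ?_, fun i j => ?_, fun i => ?_⟩
    · cases i using lastCases <;> simp [hdiag]
    · cases i using lastCases <;> cases j using lastCases <;> simp
      exact hanti _ _
    · cases i using lastCases with
      | last =>
        simp only [sum_univ_castSucc, snoc_last, snoc_castSucc, zero_mul, add_zero, ← huv]
        exact (add_sub_cancel_right u _).symm ▸ hu
      | cast i =>
        convert hc i using 1
        simp only [sum_univ_castSucc, snoc_last, snoc_castSucc, init]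
        ring

theorem Ideal.IsWeaklyRegularMod.eq_zero_of_sum_smul_mem {K : Type*} [Field K] [Algebra K R]
    {I : Ideal R} {m : ℕ} {x : Fin m → R} (hx : I.IsWeaklyRegularMod x)
    (hne : I ⊔ Ideal.span (Set.range x) ≠ ⊤) {v : Fin m → K} (hv : ∑ k, v k • x k ∈ I) :
    v = 0 := by
  simp only [Algebra.smul_def] at hv
  obtain ⟨c, -, -, hc⟩ := hx.exists_alternating_syzygy _ hv
  funext k
  by_contra hk
  refine hne (Ideal.eq_top_of_isUnit_mem _ ?_ ((isUnit_iff_ne_zero.mpr hk).map (algebraMap K R)))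
  rw [← sub_add_cancel (algebraMap K R (v k)) (∑ j, c k j * x j)]
  exact add_mem (mem_sup_left (hc k))
    (mem_sup_right (Submodule.sum_mem _ fun j _ => mul_mem_left _ _ (subset_span ⟨j, rfl⟩)))

end RegularSequence

section Homogeneous

attribute [local instance] MvPolynomial.gradedAlgebra

theorem MvPolynomial.homogeneousComponent_mul_of_le {σ R : Type*} [CommSemiring R]
    (f : MvPolynomial σ R) {q : MvPolynomial σ R} {k m : ℕ} (hq : q.IsHomogeneous k)
    (hm : m ≤ k) :
    homogeneousComponent m (f * q) = if m = k then coeff 0 f • q else 0 := by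
  classical
  have hdec (p : MvPolynomial σ R) (i : ℕ) :
      (DirectSum.decompose (homogeneousSubmodule σ R) p i : MvPolynomial σ R) =
        homogeneousComponent i p :=
    decomposition.decompose'_apply p i
  have h := DirectSum.coe_decompose_mul_of_right_mem (homogeneousSubmodule σ R) m hq (a := f)
  simp only [hdec, show k ≤ m ↔ m = k by omega] at h
  rw [h]
  split_ifs with hmk
  · rw [hmk, Nat.sub_self, homogeneousComponent_zero, smul_eq_C_mul]
  · rfl

theorem MvPolynomial.homogeneousComponent_mem_span {σ R ι : Type*} [CommSemiring R]
    {P : ι → MvPolynomial σ R} (hP : ∀ i, ∃ k, (P i).IsHomogeneous k)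
    {p : MvPolynomial σ R} (hp : p ∈ Ideal.span (Set.range P)) (m : ℕ) :
    homogeneousComponent m p ∈ Ideal.span (Set.range P) :=
  homogeneousComponent_mem_of_mem
    (Ideal.homogeneous_span _ _ (by rintro _ ⟨i, rfl⟩; exact hP i)) hp m

end Homogeneous

theorem Finset.sum_sum_smul_mul_eq_zero_of_antisymm {ι K A : Type*} [Fintype ι] [Ring K]
    [CommRing A] [Module K A] [IsAddTorsionFree A] (s : ι → ι → K) (hs : ∀ i j, s j i = -s i j)
    (x : ι → A) :
    ∑ i, ∑ j, s i j • (x j * x i) = 0 :=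
  self_eq_neg.mp <| Finset.sum_comm.trans <| by
    simp only [← Finset.sum_neg_distrib]
    refine Finset.sum_congr rfl fun i _ => Finset.sum_congr rfl fun j _ => ?_
    rw [hs, neg_smul, mul_comm]

/-- Indexes the Koszul syzygies of degree `e`. -/
abbrev KoszulPair {r : ℕ} (d : Fin r → ℕ) (e : ℕ) : Type :=
  {q : Fin r × Fin r // q.1 < q.2 ∧ d q.1 + d q.2 = e}

namespace KoszulPair

variable {r : ℕ} {d : Fin r → ℕ} {e : ℕ} {M : Type*} [AddCommGroup M]

def skewExtend (μ : KoszulPair d e → M) (i j : Fin r) : M :=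
  (if h : i < j ∧ d i + d j = e then μ ⟨(i, j), h⟩ else 0) -
    if h : j < i ∧ d j + d i = e then μ ⟨(j, i), h⟩ else 0

theorem skewExtend_swap (μ : KoszulPair d e → M) (i j : Fin r) :
    skewExtend μ j i = -skewExtend μ i j :=
  (neg_sub _ _).symm

theorem skewExtend_of_add_ne (μ : KoszulPair d e → M) {i j : Fin r} (h : d i + d j ≠ e) :
    skewExtend μ i j = 0 := by
  rw [skewExtend, dif_neg (fun h' => h h'.2), dif_neg (fun h' => h (by omega)), sub_zero]

theorem skewExtend_coe (μ : KoszulPair d e → M) (p : KoszulPair d e) :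
    skewExtend μ p.1.1 p.1.2 = μ p := by
  rw [skewExtend, dif_pos p.2, dif_neg (fun h => p.2.1.not_gt h.1), sub_zero]

theorem skewExtend_add (μ ν : KoszulPair d e → M) :
    skewExtend (μ + ν) = skewExtend μ + skewExtend ν := by
  ext i j
  simp only [skewExtend, Pi.add_apply]
  split_ifs <;> abel

theorem skewExtend_smul {R : Type*} [Ring R] [Module R M] (a : R) (μ : KoszulPair d e → M) :
    skewExtend (a • μ) = a • skewExtend μ := by
  ext i j
  simp only [skewExtend, Pi.smul_apply]
  split_ifs <;> simp [smul_sub]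

theorem skewExtend_restrict {f : Fin r → Fin r → M} (hdiag : ∀ i, f i i = 0)
    (hanti : ∀ i j, f j i = -f i j) (i j : Fin r) :
    skewExtend (fun p : KoszulPair d e => f p.1.1 p.1.2) i j =
      if d i + d j = e then f i j else 0 := by
  rcases lt_trichotomy i j with h | rfl | h <;> simp only [skewExtend]
  · simp [h, h.not_gt]
  · simp [hdiag]
  · simp only [h, h.not_gt, false_and, true_and, dite_false, add_comm (d j), hanti j i]
    split_ifs <;> simp

theorem card_eq (hd : ∀ i, 2 * d i ≤ e) :
    Fintype.card (KoszulPair d e) =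
      (Finset.univ.filter (fun i => 2 * d i = e)).card *
        ((Finset.univ.filter (fun i => 2 * d i = e)).card - 1) / 2 := by
  rw [← Nat.choose_two_right, ← Finset.card_product_filter_lt, Fintype.card_subtype]
  congr 1
  ext q
  have := hd q.1
  have := hd q.2
  simp only [Finset.mem_filter, Finset.mem_univ, true_and, Finset.mem_product]
  omega

end KoszulPair

section KoszulMap

open KoszulPair

variable {n r e : ℕ} {d : Fin r → ℕ} {Q : Fin r → PolyS n}

theorem skewExtend_smul_mem_polyGrade (hQ : ∀ i, (Q i).IsHomogeneous (e - d i))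
    (μ : KoszulPair d e → ℂ) (i j : Fin r) :
    skewExtend μ i j • Q j ∈ polyGrade n (d i) := by
  by_cases h : d i + d j = e
  · refine Submodule.smul_mem _ _ ((mem_homogeneousSubmodule _ _).2 ?_)
    rw [show d i = e - d j by omega]
    exact hQ j
  · rw [skewExtend_of_add_ne μ h, zero_smul]
    exact zero_mem _

/-- `μ ↦ ∑_{i<j} μᵢⱼ (Qⱼ eᵢ - Qᵢ eⱼ)`, a combination of Koszul syzygies. -/
noncomputable def koszulVec (hQ : ∀ i, (Q i).IsHomogeneous (e - d i)) :
    (KoszulPair d e → ℂ) →ₗ[ℂ] (i : Fin r) → polyGrade n (d i) where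
  toFun μ i := ⟨∑ j, skewExtend μ i j • Q j,
    Submodule.sum_mem _ fun j _ => skewExtend_smul_mem_polyGrade hQ μ i j⟩
  map_add' μ ν := by
    ext i
    simp [skewExtend_add, add_smul, Finset.sum_add_distrib]
  map_smul' a μ := by
    ext i
    simp [skewExtend_smul, mul_smul, Finset.smul_sum]

theorem coe_koszulVec_apply (hQ : ∀ i, (Q i).IsHomogeneous (e - d i)) (μ : KoszulPair d e → ℂ)
    (i : Fin r) : (koszulVec hQ μ i : PolyS n) = ∑ j, skewExtend μ i j • Q j :=
  rfl

noncomputable def koszulMap (hQ : ∀ i, (Q i).IsHomogeneous (e - d i)) (I : Ideal (PolyS n)) :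
    (KoszulPair d e → ℂ) →ₗ[ℂ] (i : Fin r) → quotPiece n I (d i) :=
  LinearMap.piMap (fun _ => Submodule.mkQ _) ∘ₗ koszulVec hQ

theorem koszulMap_apply (hQ : ∀ i, (Q i).IsHomogeneous (e - d i)) (I : Ideal (PolyS n))
    (μ : KoszulPair d e → ℂ) :
    koszulMap hQ I μ = fun i => Submodule.Quotient.mk (koszulVec hQ μ i) :=
  rfl

theorem sum_koszulVec_mul_eq_zero (hQ : ∀ i, (Q i).IsHomogeneous (e - d i))
    (μ : KoszulPair d e → ℂ) :
    ∑ i, (koszulVec hQ μ i : PolyS n) * Q i = 0 := by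
  simp only [coe_koszulVec_apply, Finset.sum_mul, smul_mul_assoc]
  exact Finset.sum_sum_smul_mul_eq_zero_of_antisymm _ (skewExtend_swap μ) Q

theorem koszulMap_injective (hQ : ∀ i, (Q i).IsHomogeneous (e - d i)) {I : Ideal (PolyS n)}
    (hx : I.IsWeaklyRegularMod Q) (hne : I ⊔ Ideal.span (Set.range Q) ≠ ⊤) :
    Function.Injective (koszulMap hQ I) := by
  refine (injective_iff_map_eq_zero _).2 fun μ hμ => ?_
  have hrow (i : Fin r) : skewExtend μ i = 0 := by
    refine hx.eq_zero_of_sum_smul_mem hne ?_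
    have := congrFun hμ i
    rwa [koszulMap_apply, Pi.zero_apply, Submodule.Quotient.mk_eq_zero] at this
  funext p
  rw [← skewExtend_coe μ p, hrow]
  rfl

theorem exists_koszulVec_sub_mem {P : Fin r → PolyS n} (hP : ∀ i, (P i).IsHomogeneous (d i))
    (hQ : ∀ i, (Q i).IsHomogeneous (e - d i)) (hd : ∀ i, 2 * d i ≤ e)
    (hx : (Ideal.span (Set.range P)).IsWeaklyRegularMod Q)
    (g : (i : Fin r) → polyGrade n (d i))
    (hg : ∑ i, (g i : PolyS n) * Q i ∈ Ideal.span (Set.range P)) :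
    ∃ μ, ∀ i, (g i : PolyS n) - koszulVec hQ μ i ∈ Ideal.span (Set.range P) := by
  obtain ⟨c, hdiag, hanti, hc⟩ := hx.exists_alternating_syzygy _ hg
  refine ⟨fun p => coeff 0 (c p.1.1 p.1.2), fun i => ?_⟩
  -- the degree `d i` part of `∑ⱼ cᵢⱼ Qⱼ` only sees the constant terms of the `cᵢⱼ`
  have hcomp : homogeneousComponent (d i) ((g i : PolyS n) - ∑ j, c i j * Q j) =
      (g i : PolyS n) - koszulVec hQ (fun p => coeff 0 (c p.1.1 p.1.2)) i := by
    rw [map_sub, map_sum, homogeneousComponent_of_mem (g i).2, if_pos rfl, coe_koszulVec_apply]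
    congr 1
    refine Finset.sum_congr rfl fun j _ => ?_
    have := hd i
    have := hd j
    rw [homogeneousComponent_mul_of_le _ (hQ j) (by omega),
      skewExtend_restrict (f := fun i j => coeff 0 (c i j)) (fun i => by rw [hdiag, coeff_zero])
        (fun i j => by rw [hanti, coeff_neg])]
    simp only [show d i = e - d j ↔ d i + d j = e by omega, ite_smul, zero_smul]
  rw [← hcomp]
  exact homogeneousComponent_mem_span (fun i => ⟨_, hP i⟩) (hc i) _

theorem range_koszulMap_eq_ker {V : Type*} [AddCommGroup V] [Module ℂ V] {P : Fin r → PolyS n}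
    (hP : ∀ i, (P i).IsHomogeneous (d i)) (hQ : ∀ i, (Q i).IsHomogeneous (e - d i))
    (hd : ∀ i, 2 * d i ≤ e) (hx : (Ideal.span (Set.range P)).IsWeaklyRegularMod Q)
    (φ : ((i : Fin r) → quotPiece n (Ideal.span (Set.range P)) (d i)) →ₗ[ℂ] V)
    (hker : ∀ g : (i : Fin r) → polyGrade n (d i), φ (fun i => Submodule.Quotient.mk (g i)) = 0 ↔
      ∑ i, (g i : PolyS n) * Q i ∈ Ideal.span (Set.range P)) :
    LinearMap.range (koszulMap hQ (Ideal.span (Set.range P))) = LinearMap.ker φ := by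
  refine le_antisymm ?_ fun x hx' => ?_
  · rintro _ ⟨μ, rfl⟩
    exact (hker _).2 (sum_koszulVec_mul_eq_zero hQ μ ▸ zero_mem _)
  · choose g hg using fun i => Submodule.Quotient.mk_surjective _ (x i)
    obtain rfl : (fun i => Submodule.Quotient.mk (g i)) = x := funext hg
    obtain ⟨μ, hμ⟩ := exists_koszulVec_sub_mem hP hQ hd hx g ((hker g).1 hx')
    refine ⟨μ, funext fun i => (Submodule.Quotient.eq _).2 ?_⟩
    simpa using neg_mem (hμ i)

end KoszulMap

/-- if `P₁,…,P_r,Q₁,…,Q_r` is a regular sequence with `deg Pᵢ = dᵢ`,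
`1 ≤ dᵢ`, `2dᵢ ≤ e`, `deg Qᵢ = e − dᵢ`, and `I' = (P₁,…,P_r)`, then the kernel of the
map `φ : ⊕ᵢ (S/I')_{dᵢ} → (S/I')_e`, `(g₁,…,g_r) ↦ Σ gᵢ·Qᵢ`, has dimension `a(a−1)/2`
where `a = #{i : 2dᵢ = e}`. -/
theorem statement2 (n r e : ℕ)
    (P Q : Fin r → PolyS n) (d : Fin r → ℕ)
    (hd2 : ∀ i, 2 * d i ≤ e)
    (hP : ∀ i, (P i).IsHomogeneous (d i))
    (hQ : ∀ i, (Q i).IsHomogeneous (e - d i))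
    (hreg : RingTheory.Sequence.IsRegular (PolyS n) (List.ofFn P ++ List.ofFn Q))
    (I' : Ideal (PolyS n)) (hI' : I' = Ideal.span (Set.range P))
    (a : ℕ) (ha : a = (Finset.univ.filter (fun i : Fin r => 2 * d i = e)).card)
    (φ : ((i : Fin r) → quotPiece n I' (d i)) →ₗ[ℂ] quotPiece n I' e)
    (hφ : ∀ g : (i : Fin r) → polyGrade n (d i),
      φ (fun i => Submodule.Quotient.mk (g i)) =
        Submodule.Quotient.mk ⟨∑ i, (g i : PolyS n) * Q i, by
          refine Submodule.sum_mem _ fun i _ => ?_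
          have h1 := ((MvPolynomial.mem_homogeneousSubmodule _ _).1 (g i).2).mul (hQ i)
          have hde : d i ≤ e := by have := hd2 i; omega
          rw [Nat.add_sub_cancel' hde] at h1
          exact (MvPolynomial.mem_homogeneousSubmodule _ _).2 h1⟩) :
    Module.finrank ℂ (LinearMap.ker φ) = a * (a - 1) / 2 := by
  subst hI' ha
  have hker (g : (i : Fin r) → polyGrade n (d i)) :
      φ (fun i => Submodule.Quotient.mk (g i)) = 0 ↔
        ∑ i, (g i : PolyS n) * Q i ∈ Ideal.span (Set.range P) := by
    rw [hφ, Submodule.Quotient.mk_eq_zero]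
    rfl
  have hx := hreg.toIsWeaklyRegular.isWeaklyRegularMod
  rw [← range_koszulMap_eq_ker hP hQ hd2 hx φ hker,
    LinearMap.finrank_range_of_inj (koszulMap_injective hQ hx hreg.span_range_sup_ne_top),
    Module.finrank_fintype_fun_eq_card, KoszulPair.card_eq hd2]
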